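/- (Theorem B.1) For all real a, ε, μ, μ', τ₀, b, φ₀, every real time τ, and all integers j and k, shifting the angle parameters b and φ₀ of the full time-dependent Hamiltonian h = h₀ + h₁ by 2πj/N and 2πk/N respectively is equivalent to conjugation by clock and shift operators: h(b + 2πj/N, φ₀ + 2πk/N, τ) = Z^{j} X^{k} · h(b, φ₀, τ) · X^{−k} Z^{−j}. -/

import Mathlib

/-!
`Z` and `X` are unitary and satisfy the Weyl relation `Z X = ω X Z`. Hence conjugation by the
unitary `Z^j X^k` is a ⋆-algebra automorphism of the matrix algebra that multiplies `X` by `ω^j`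
and `Z` by `ω^{-k}`. The Hamiltonian is a fixed real-linear ⋆-polynomial in `e^{ib} X` and
`e^{-iφ₀} Z`, and these two operators are carried to `e^{i(b + 2πj/N)} X` and
`e^{-i(φ₀ + 2πk/N)} Z`.
-/

open Matrix Complex

noncomputable section

/-- `ω = exp(2πi/N)`. -/
def omegaN (N : ℕ) : ℂ := Complex.exp (2 * Real.pi * Complex.I / N)

/-- The shift matrix `X` with entries `X j k = 1` iff `j ≡ k+1 (mod N)`. -/
def shiftX (N : ℕ) : Matrix (Fin N) (Fin N) ℂ :=
  Matrix.of fun j k => if (j : ℕ) = ((k : ℕ) + 1) % N then 1 else 0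

/-- The clock matrix `Z = diag(ω^j)`. -/
def clockZ (N : ℕ) : Matrix (Fin N) (Fin N) ℂ :=
  Matrix.diagonal fun j => omegaN N ^ (j : ℕ)


/-- The unperturbed Harper Hamiltonian in clock-and-shift form:
`h₀(b,φ₀) = a·I − (a/2)(e^{ib} X + e^{−ib} X†) − (ε/2)(e^{−iφ₀} Z + e^{iφ₀} Z†)`. -/
def harperH0 (N : ℕ) (a ε b φ₀ : ℝ) : Matrix (Fin N) (Fin N) ℂ :=
  (a : ℂ) • (1 : Matrix (Fin N) (Fin N) ℂ)
    - ((a : ℂ) / 2) • (Complex.exp (Complex.I * b) • shiftX N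
        + Complex.exp (-(Complex.I * b)) • (shiftX N)ᴴ)
    - ((ε : ℂ) / 2) • (Complex.exp (-(Complex.I * φ₀)) • clockZ N
        + Complex.exp (Complex.I * φ₀) • (clockZ N)ᴴ)


/-- The time-dependent perturbation in clock-and-shift form:
`h₁(φ₀,τ) = −((μ+μ~)/2)(e^{−iφ₀} Z + e^{iφ₀} Z†)·cos(τ−τ₀)
          + ((μ~−μ)/(2i))(e^{−iφ₀} Z − e^{iφ₀} Z†)·sin(τ−τ₀)`. -/
def harperH1 (N : ℕ) (μ μ2 τ₀ φ₀ τ : ℝ) : Matrix (Fin N) (Fin N) ℂ :=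
  (-((((μ : ℂ) + μ2) / 2) * (Real.cos (τ - τ₀) : ℂ))) •
      (Complex.exp (-(Complex.I * φ₀)) • clockZ N
        + Complex.exp (Complex.I * φ₀) • (clockZ N)ᴴ)
    + (((((μ2 : ℂ) - μ) / (2 * Complex.I))) * (Real.sin (τ - τ₀) : ℂ)) •
      (Complex.exp (-(Complex.I * φ₀)) • clockZ N
        - Complex.exp (Complex.I * φ₀) • (clockZ N)ᴴ)

/-- The full time-dependent Hamiltonian of the periodically perturbed Harper model. -/
def harperH (N : ℕ) (a ε μ μ2 τ₀ b φ₀ τ : ℝ) : Matrix (Fin N) (Fin N) ℂ :=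
  harperH0 N a ε b φ₀ + harperH1 N μ μ2 τ₀ φ₀ τ

namespace Unitary

variable {K R : Type*} [Field K] [Semiring R] [StarMul R] [Module K R] [IsScalarTower K R R]
  [SMulCommClass K R R]

theorem conjStarAlgAut_apply_eq_smul_of_mul_eq_smul_mul {u v : unitary R} {c : K}
    (h : (u * v : R) = c • (v * u : R)) : conjStarAlgAut K R u v = c • (v : R) := by
  rw [conjStarAlgAut_apply, h, smul_mul_assoc, mul_assoc, mul_star_self_of_mem u.prop, mul_one]

theorem conjStarAlgAut_apply_eq_inv_smul_of_mul_eq_smul_mul {u v : unitary R} {c : K}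
    (hc : c ≠ 0) (h : (u * v : R) = c • (v * u : R)) :
    conjStarAlgAut K R v u = c⁻¹ • (u : R) := by
  rw [eq_inv_smul_iff₀ hc, conjStarAlgAut_apply, ← smul_mul_assoc, ← h, mul_assoc,
    mul_star_self_of_mem v.prop, mul_one]

theorem conjStarAlgAut_zpow_apply_self (u : unitary R) (m : ℤ) :
    conjStarAlgAut K R (u ^ m) u = u := by
  rw [conjStarAlgAut_apply, ← Submonoid.coe_mul, (Commute.zpow_self u m).eq,
    Submonoid.coe_mul, mul_assoc, mul_star_self_of_mem (u ^ m).prop, mul_one]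

theorem conjStarAlgAut_zpow_apply_of_apply_eq_smul {u : unitary R} {x : R} {c : K} (hc : c ≠ 0)
    (h : conjStarAlgAut K R u x = c • x) (m : ℤ) :
    conjStarAlgAut K R (u ^ m) x = c ^ m • x := by
  have h_inv : conjStarAlgAut K R u⁻¹ x = c⁻¹ • x := by
    rw [eq_inv_smul_iff₀ hc, ← map_smul, ← h, ← conjStarAlgAut_mul_apply, inv_mul_cancel,
      map_one, StarAlgEquiv.one_apply]
  induction m using Int.induction_on with
  | zero => simp
  | succ m ih =>
    rw [_root_.zpow_add_one, conjStarAlgAut_mul_apply, h, map_smul, ih, smul_smul,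
      zpow_add_one₀ hc, mul_comm]
  | pred m ih =>
    rw [_root_.zpow_sub_one, conjStarAlgAut_mul_apply, h_inv, map_smul, ih, smul_smul,
      zpow_sub_one₀ hc, mul_comm]

end Unitary

namespace Matrix

theorem coe_unitaryGroup_zpow {n α : Type*} [Fintype n] [DecidableEq n] [CommRing α] [StarRing α]
    (U : unitaryGroup n α) (m : ℤ) :
    ((U ^ m : unitaryGroup n α) : Matrix n n α) = (U : Matrix n n α) ^ m := by
  rw [← Unitary.val_toUnits_apply, map_zpow, coe_units_zpow, Unitary.val_toUnits_apply]

theorem conjStarAlgAut_zpow_mul_zpow_apply {n α : Type*} [Fintype n] [DecidableEq n] [CommRing α]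
    [StarRing α] (U V : unitaryGroup n α) (j k : ℤ) (H : Matrix n n α) :
    Unitary.conjStarAlgAut α _ (U ^ j * V ^ k) H
      = (U : Matrix n n α) ^ j * (V : Matrix n n α) ^ k * H * (V : Matrix n n α) ^ (-k)
          * (U : Matrix n n α) ^ (-j) := by
  rw [Unitary.conjStarAlgAut_apply, ← Unitary.coe_star, Unitary.star_eq_inv, _root_.mul_inv_rev,
    ← _root_.zpow_neg, ← _root_.zpow_neg]
  simp only [Submonoid.coe_mul, coe_unitaryGroup_zpow, mul_assoc]

end Matrix

section Harper

variable {N : ℕ}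

theorem omegaN_ne_zero : omegaN N ≠ 0 := Complex.exp_ne_zero _

theorem omegaN_pow_card [NeZero N] : omegaN N ^ N = 1 := by
  rw [omegaN, ← Complex.exp_nat_mul, mul_div_cancel₀ _ (NeZero.ne (N : ℂ)),
    Complex.exp_two_pi_mul_I]

theorem star_omegaN : star (omegaN N) = (omegaN N)⁻¹ := by
  rw [omegaN, ← Complex.exp_neg, Complex.star_def, ← Complex.exp_conj]
  congr 1
  simp [map_ofNat, neg_div]

theorem exp_I_mul_add_two_pi_mul_div (x : ℝ) (m : ℤ) :
    Complex.exp (I * ↑(x + 2 * Real.pi * m / N)) = Complex.exp (I * x) * omegaN N ^ m := by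
  rw [omegaN, ← Complex.exp_int_mul, ← Complex.exp_add]
  congr 1
  push_cast
  ring

theorem shiftX_apply [NeZero N] (p q : Fin N) : shiftX N p q = if p = q + 1 then 1 else 0 := by
  simp [shiftX, Fin.ext_iff, Fin.val_add, Nat.add_mod]

theorem shiftX_mem_unitaryGroup [NeZero N] : shiftX N ∈ unitaryGroup (Fin N) ℂ := by
  rw [mem_unitaryGroup_iff']
  ext p q
  simp [mul_apply, shiftX_apply, one_apply, eq_comm]

theorem clockZ_mem_unitaryGroup : clockZ N ∈ unitaryGroup (Fin N) ℂ := by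
  rw [mem_unitaryGroup_iff, clockZ, star_eq_conjTranspose, diagonal_conjTranspose,
    diagonal_mul_diagonal, ← diagonal_one]
  congr 1
  ext i
  simp only [Pi.star_apply, star_pow, star_omegaN, inv_pow]
  exact mul_inv_cancel₀ (pow_ne_zero _ omegaN_ne_zero)

theorem clockZ_mul_shiftX [NeZero N] :
    clockZ N * shiftX N = omegaN N • (shiftX N * clockZ N) := by
  ext p q
  simp only [clockZ, diagonal_mul, mul_diagonal, Matrix.smul_apply, shiftX_apply, smul_eq_mul]
  split_ifs with h
  · rw [h, Fin.val_add, Fin.val_one', ← pow_eq_pow_mod _ omegaN_pow_card, pow_add,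
      ← pow_eq_pow_mod _ omegaN_pow_card]
    ring
  · simp

variable (N)

def clockZUnitary : unitaryGroup (Fin N) ℂ := ⟨clockZ N, clockZ_mem_unitaryGroup⟩

theorem coe_clockZUnitary : (clockZUnitary N : Matrix (Fin N) (Fin N) ℂ) = clockZ N := rfl

variable [NeZero N]

def shiftXUnitary : unitaryGroup (Fin N) ℂ := ⟨shiftX N, shiftX_mem_unitaryGroup⟩

theorem coe_shiftXUnitary : (shiftXUnitary N : Matrix (Fin N) (Fin N) ℂ) = shiftX N := rfl

theorem clockZUnitary_mul_shiftXUnitary :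
    (clockZUnitary N * shiftXUnitary N : Matrix (Fin N) (Fin N) ℂ)
      = omegaN N • (shiftXUnitary N * clockZUnitary N : Matrix (Fin N) (Fin N) ℂ) := by
  rw [coe_clockZUnitary, coe_shiftXUnitary, clockZ_mul_shiftX]

theorem conjStarAlgAut_clockShift_apply_shiftX (j k : ℤ) :
    Unitary.conjStarAlgAut ℂ _ (clockZUnitary N ^ j * shiftXUnitary N ^ k) (shiftX N)
      = omegaN N ^ j • shiftX N := by
  have hZ := Unitary.conjStarAlgAut_apply_eq_smul_of_mul_eq_smul_mul
    (clockZUnitary_mul_shiftXUnitary N)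
  have hX := Unitary.conjStarAlgAut_zpow_apply_self (K := ℂ) (shiftXUnitary N) k
  rw [coe_shiftXUnitary] at hZ hX
  rw [Unitary.conjStarAlgAut_mul_apply, hX,
    Unitary.conjStarAlgAut_zpow_apply_of_apply_eq_smul omegaN_ne_zero hZ]

theorem conjStarAlgAut_clockShift_apply_clockZ (j k : ℤ) :
    Unitary.conjStarAlgAut ℂ _ (clockZUnitary N ^ j * shiftXUnitary N ^ k) (clockZ N)
      = (omegaN N)⁻¹ ^ k • clockZ N := by
  have hX := Unitary.conjStarAlgAut_apply_eq_inv_smul_of_mul_eq_smul_mul omegaN_ne_zero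
    (clockZUnitary_mul_shiftXUnitary N)
  have hZ := Unitary.conjStarAlgAut_zpow_apply_self (K := ℂ) (clockZUnitary N) j
  rw [coe_clockZUnitary] at hX hZ
  rw [Unitary.conjStarAlgAut_mul_apply,
    Unitary.conjStarAlgAut_zpow_apply_of_apply_eq_smul (inv_ne_zero omegaN_ne_zero) hX,
    map_smul, hZ]

end Harper

/-- (Theorem B.1) Shifting the angle parameters b and φ₀ of the full time-dependent
Hamiltonian h = h₀ + h₁ by 2πj/N and 2πk/N is equivalent to conjugation by clock and
shift operators. -/
theorem harperH_shift_conj (N : ℕ) (hN : 0 < N) (a ε μ μ2 τ₀ b φ₀ τ : ℝ) (j k : ℤ) :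
    harperH N a ε μ μ2 τ₀ (b + 2 * Real.pi * j / N) (φ₀ + 2 * Real.pi * k / N) τ
      = clockZ N ^ j * shiftX N ^ k * harperH N a ε μ μ2 τ₀ b φ₀ τ
          * shiftX N ^ (-k) * clockZ N ^ (-j) := by
  have : NeZero N := ⟨hN.ne'⟩
  rw [← coe_clockZUnitary, ← coe_shiftXUnitary, ← conjStarAlgAut_zpow_mul_zpow_apply]
  simp only [harperH, harperH0, harperH1, map_add, map_sub, map_smul, map_one,
    ← star_eq_conjTranspose, map_star, conjStarAlgAut_clockShift_apply_shiftX,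
    conjStarAlgAut_clockShift_apply_clockZ, star_smul, star_zpow₀, star_inv₀, star_omegaN,
    inv_inv, _root_.inv_zpow, Complex.exp_neg, exp_I_mul_add_two_pi_mul_div]
  match_scalars <;> ring
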